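/- Let p > 1, a ∈ [1/4, 1], and for b ≥ 0 set V_{a,b}(y) := ((a + 1/2)/(p − 1 + b y²))^{1/(p−1)}. Define G₁ := the 2×2 matrix with entries G₁[1,1] = ⟨−y² e^{−a y²/4}, e^{−a y²/4}⟩, G₁[1,2] = (a + 1/2)^{−1} ⟨e^{−a y²/4}, e^{−a y²/4}⟩, G₁[2,1] = ⟨−y² e^{−a y²/4}, (1 − a y²) e^{−a y²/4}⟩, G₁[2,2] = 0 (L² inner products on ℝ). Then G₁ is invertible, with determinant bounded away from 0 uniformly for a ∈ [1/4, 1]. -/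

import Mathlib

/-! The two Gaussians multiply to `exp (-(a/2) y²)`, so every entry of `G₁` is a Gaussian moment
`Mₙ = ∫ yⁿ exp (-c y²)`. Writing these through the Gamma function, `Γ (s + 1) = s Γ s` gives
`Mₙ₊₂ = (n + 1)/(2c) Mₙ`, whence `G₁[1,2] = √(2π/a)/(a + 1/2)` and `G₁[2,1] = a M₄ - M₂ = 2√(2π/a)/a`.
As `G₁[2,2] = 0`, `det G₁ = -4π/(a²(a + 1/2))`, of absolute value at least `8π/3` for `0 < a ≤ 1`. -/

open MeasureTheory

/-- The matrix `G₁` appearing in the Lyapunov–Schmidt splitting, built from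
`L²(ℝ)` inner products of Gaussian functions. -/
noncomputable def GOne (a : ℝ) : Matrix (Fin 2) (Fin 2) ℝ :=
  Matrix.of
    ![![∫ y : ℝ, (-(y ^ 2) * Real.exp (-a * y ^ 2 / 4)) * Real.exp (-a * y ^ 2 / 4),
        (a + 1 / 2)⁻¹ * ∫ y : ℝ, Real.exp (-a * y ^ 2 / 4) * Real.exp (-a * y ^ 2 / 4)],
      ![∫ y : ℝ, (-(y ^ 2) * Real.exp (-a * y ^ 2 / 4)) *
          ((1 - a * y ^ 2) * Real.exp (-a * y ^ 2 / 4)),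
        0]]

open Real

section GaussianMoments

variable {c : ℝ}

lemma integral_abs_rpow_mul_exp_neg_mul_sq (hc : 0 < c) {s : ℝ} (hs : -1 < s) :
    ∫ y : ℝ, |y| ^ s * exp (-c * y ^ 2) = c ^ (-(s + 1) / 2) * Gamma ((s + 1) / 2) := by
  have h := integral_comp_abs (f := fun y => y ^ s * exp (-c * y ^ 2))
  simp only [sq_abs] at h
  rw [h]
  simp_rw [← rpow_two]
  rw [integral_rpow_mul_exp_neg_mul_rpow two_pos hs hc]
  ring

lemma integral_pow_mul_exp_neg_mul_sq_of_even (hc : 0 < c) {n : ℕ} (hn : Even n) :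
    ∫ y : ℝ, y ^ n * exp (-c * y ^ 2) = c ^ (-(n + 1) / 2 : ℝ) * Gamma ((n + 1) / 2) := by
  have hn' : (-1 : ℝ) < n := by linarith [n.cast_nonneg (α := ℝ)]
  rw [← integral_abs_rpow_mul_exp_neg_mul_sq hc hn']
  simp_rw [rpow_natCast, hn.pow_abs]

lemma integral_pow_add_two_mul_exp_neg_mul_sq (hc : 0 < c) {n : ℕ} (hn : Even n) :
    ∫ y : ℝ, y ^ (n + 2) * exp (-c * y ^ 2) =
      (n + 1) / (2 * c) * ∫ y : ℝ, y ^ n * exp (-c * y ^ 2) := by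
  rw [integral_pow_mul_exp_neg_mul_sq_of_even hc hn,
    integral_pow_mul_exp_neg_mul_sq_of_even hc (hn.add even_two)]
  have hGamma : Gamma ((((n + 2 : ℕ) : ℝ) + 1) / 2) = (n + 1) / 2 * Gamma ((n + 1) / 2) := by
    rw [← Gamma_add_one (by positivity)]
    push_cast
    ring_nf
  have hpow : c ^ (-(((n + 2 : ℕ) : ℝ) + 1) / 2) = c ^ (-(n + 1) / 2 : ℝ) * c⁻¹ := by
    rw [← rpow_neg_one, ← rpow_add hc]
    push_cast
    ring_nf
  rw [hGamma, hpow]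
  field_simp

lemma integral_sq_mul_exp_neg_mul_sq (hc : 0 < c) :
    ∫ y : ℝ, y ^ 2 * exp (-c * y ^ 2) = √(π / c) / (2 * c) := by
  have h := integral_pow_add_two_mul_exp_neg_mul_sq hc Even.zero
  simp only [Nat.cast_zero, zero_add, pow_zero, one_mul] at h
  rw [h, integral_gaussian]
  ring

lemma integral_pow_four_mul_exp_neg_mul_sq (hc : 0 < c) :
    ∫ y : ℝ, y ^ 4 * exp (-c * y ^ 2) = 3 * √(π / c) / (4 * c ^ 2) := by
  rw [integral_pow_add_two_mul_exp_neg_mul_sq hc (n := 2) even_two,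
    integral_sq_mul_exp_neg_mul_sq hc]
  field_simp
  norm_num

lemma integrable_pow_mul_exp_neg_mul_sq (hc : 0 < c) (n : ℕ) :
    Integrable fun y : ℝ => y ^ n * exp (-c * y ^ 2) := by
  simpa only [rpow_natCast] using
    integrable_rpow_mul_exp_neg_mul_sq hc (by linarith [n.cast_nonneg (α := ℝ)] : (-1 : ℝ) < n)

end GaussianMoments

lemma exp_neg_mul_sq_div_four_mul_self (a y : ℝ) :
    exp (-a * y ^ 2 / 4) * exp (-a * y ^ 2 / 4) = exp (-(a / 2) * y ^ 2) := by
  rw [← exp_add]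
  ring_nf

lemma GOne_zero_one (a : ℝ) : GOne a 0 1 = (a + 1 / 2)⁻¹ * √(2 * π / a) := by
  simp only [GOne, Matrix.of_apply, Matrix.cons_val', Matrix.cons_val_zero, Matrix.cons_val_one,
    Matrix.empty_val', Matrix.cons_val_fin_one, exp_neg_mul_sq_div_four_mul_self,
    integral_gaussian]
  rw [div_div_eq_mul_div, mul_comm π]

lemma GOne_one_zero {a : ℝ} (ha : 0 < a) : GOne a 1 0 = 2 / a * √(2 * π / a) := by
  have hc : 0 < a / 2 := half_pos ha
  have hintegrand : ∀ y : ℝ, (-(y ^ 2) * exp (-a * y ^ 2 / 4)) *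
      ((1 - a * y ^ 2) * exp (-a * y ^ 2 / 4)) =
        a * (y ^ 4 * exp (-(a / 2) * y ^ 2)) - y ^ 2 * exp (-(a / 2) * y ^ 2) := by
    intro y
    rw [← exp_neg_mul_sq_div_four_mul_self]
    ring
  simp only [GOne, Matrix.of_apply, Matrix.cons_val', Matrix.cons_val_zero, Matrix.cons_val_one,
    Matrix.empty_val', Matrix.cons_val_fin_one, hintegrand]
  rw [integral_sub ((integrable_pow_mul_exp_neg_mul_sq hc 4).const_mul a)
      (integrable_pow_mul_exp_neg_mul_sq hc 2), integral_const_mul,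
    integral_pow_four_mul_exp_neg_mul_sq hc, integral_sq_mul_exp_neg_mul_sq hc,
    div_div_eq_mul_div, mul_comm π]
  field_simp
  ring

lemma GOne_det {a : ℝ} (ha : 0 < a) : (GOne a).det = -(4 * π / (a ^ 2 * (a + 1 / 2))) := by
  rw [Matrix.det_fin_two, GOne_zero_one, GOne_one_zero ha]
  have hsq : √(2 * π / a) ^ 2 = 2 * π / a := sq_sqrt (by positivity)
  have h11 : GOne a 1 1 = 0 := rfl
  rw [h11, mul_zero, zero_sub, neg_inj]
  calc (a + 1 / 2)⁻¹ * √(2 * π / a) * (2 / a * √(2 * π / a))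
      = (a + 1 / 2)⁻¹ * (2 / a) * √(2 * π / a) ^ 2 := by ring
    _ = 4 * π / (a ^ 2 * (a + 1 / 2)) := by
      rw [hsq]
      field_simp
      ring

lemma eight_le_four_mul_pi_div {a : ℝ} (ha₀ : 0 < a) (ha₁ : a ≤ 1) :
    8 ≤ 4 * π / (a ^ 2 * (a + 1 / 2)) := by
  have hcube : a ^ 2 * (a + 1 / 2) ≤ 3 / 2 := by
    have : a ^ 2 ≤ 1 := pow_le_one₀ ha₀.le ha₁
    nlinarith
  rw [le_div_iff₀ (by positivity)]
  nlinarith [pi_gt_three]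

theorem GOne_invertible_general :
    ∃ δ > (0 : ℝ), ∀ a ∈ Set.Icc (1 / 4 : ℝ) 1,
      IsUnit (GOne a) ∧ δ ≤ |(GOne a).det| := by
  refine ⟨8, by norm_num, fun a ⟨ha_ge, ha_le⟩ => ?_⟩
  have ha : 0 < a := by linarith
  have hbound := eight_le_four_mul_pi_div ha ha_le
  have habs : |(GOne a).det| = 4 * π / (a ^ 2 * (a + 1 / 2)) := by
    rw [GOne_det ha, abs_neg, abs_of_pos (by positivity)]
  refine ⟨?_, habs ▸ hbound⟩
  rw [Matrix.isUnit_iff_isUnit_det, isUnit_iff_ne_zero, ← abs_ne_zero, habs]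
  linarith

/-- `G₁` is invertible with determinant bounded away from `0`
uniformly for `a ∈ [1/4, 1]`. -/
theorem GOne_invertible (p : ℝ) (hp : 1 < p) :
    ∃ δ > (0 : ℝ), ∀ a ∈ Set.Icc (1 / 4 : ℝ) 1,
      IsUnit (GOne a) ∧ δ ≤ |(GOne a).det| :=
  GOne_invertible_general
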